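/- Every push-pop regular expression e over Σ can be provably transformed to normal form: there exists an expression e' that is a finite sum of products ē·d with ē a pure pop expression and d a pure push expression, such that e = e' is derivable in the equational theory of Kleene algebra augmented with the axioms push a · pop a = 1 for all a ∈ V and push a · pop b = 0 for all a ≠ b in V. -/

import Mathlib

/-- Push-pop StacKAT expressions: regular-expression terms over push/pop of values in `V`. -/
inductive Exp (V : Type) : Type
  | zero : Exp V
  | one : Exp V
  | plus : Exp V → Exp V → Exp V
  | seq : Exp V → Exp V → Exp V
  | star : Exp V → Exp V
  | push : V → Exp V
  | pop : V → Exp V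

/-- `n`-fold relational composition of a relation. -/
def relPow {α : Type*} (r : α → α → Prop) : ℕ → α → α → Prop
  | 0 => Eq
  | n + 1 => Relation.Comp r (relPow r n)

/-- The relational semantics of a push-pop StacKAT expression, as a binary relation on stacks. -/
def denote {V : Type} : Exp V → List V → List V → Prop
  | Exp.zero => fun _ _ => False
  | Exp.one => Eq
  | Exp.plus e f => fun s t => denote e s t ∨ denote f s t
  | Exp.seq e f => Relation.Comp (denote e) (denote f)
  | Exp.star e => fun s t => ∃ n, relPow (denote e) n s t
  | Exp.push v => fun s t => t = v :: s
  | Exp.pop v => fun s t => s = v :: t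

/-- Derivability in the equational theory of Kleene algebra over push-pop regular
expressions, augmented with the axioms `push a · pop a = 1` and
`push a · pop b = 0` for `a ≠ b`. Inequality `e ≤ f` is encoded as `e + f = f`. -/
inductive KAeq {V : Type} : Exp V → Exp V → Prop
  | refl (e : Exp V) : KAeq e e
  | symm {e f : Exp V} : KAeq e f → KAeq f e
  | trans {e f g : Exp V} : KAeq e f → KAeq f g → KAeq e g
  | plus_congr {e₁ e₂ f₁ f₂ : Exp V} :
      KAeq e₁ e₂ → KAeq f₁ f₂ → KAeq (e₁.plus f₁) (e₂.plus f₂)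
  | seq_congr {e₁ e₂ f₁ f₂ : Exp V} :
      KAeq e₁ e₂ → KAeq f₁ f₂ → KAeq (e₁.seq f₁) (e₂.seq f₂)
  | star_congr {e f : Exp V} : KAeq e f → KAeq e.star f.star
  | plus_assoc (e f g : Exp V) : KAeq ((e.plus f).plus g) (e.plus (f.plus g))
  | plus_comm (e f : Exp V) : KAeq (e.plus f) (f.plus e)
  | plus_idem (e : Exp V) : KAeq (e.plus e) e
  | plus_zero (e : Exp V) : KAeq (e.plus Exp.zero) e
  | seq_assoc (e f g : Exp V) : KAeq ((e.seq f).seq g) (e.seq (f.seq g))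
  | one_seq (e : Exp V) : KAeq (Exp.one.seq e) e
  | seq_one (e : Exp V) : KAeq (e.seq Exp.one) e
  | zero_seq (e : Exp V) : KAeq (Exp.zero.seq e) Exp.zero
  | seq_zero (e : Exp V) : KAeq (e.seq Exp.zero) Exp.zero
  | left_distrib (e f g : Exp V) :
      KAeq (e.seq (f.plus g)) ((e.seq f).plus (e.seq g))
  | right_distrib (e f g : Exp V) :
      KAeq ((e.plus f).seq g) ((e.seq g).plus (f.seq g))
  /-- `1 + e·e* ≤ e*` -/
  | star_unfold_left (e : Exp V) :
      KAeq ((Exp.one.plus (e.seq e.star)).plus e.star) e.star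
  /-- `1 + e*·e ≤ e*` -/
  | star_unfold_right (e : Exp V) :
      KAeq ((Exp.one.plus (e.star.seq e)).plus e.star) e.star
  /-- `b + e·x ≤ x ⟹ e*·b ≤ x` -/
  | star_fix_left {e b x : Exp V} :
      KAeq ((b.plus (e.seq x)).plus x) x → KAeq ((e.star.seq b).plus x) x
  /-- `b + x·e ≤ x ⟹ b·e* ≤ x` -/
  | star_fix_right {e b x : Exp V} :
      KAeq ((b.plus (x.seq e)).plus x) x → KAeq ((b.seq e.star).plus x) x
  /-- `push a · pop a = 1` -/
  | push_pop (a : V) : KAeq ((Exp.push a).seq (Exp.pop a)) Exp.one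
  /-- `push a · pop b = 0` for `a ≠ b` -/
  | push_pop_ne {a b : V} : a ≠ b → KAeq ((Exp.push a).seq (Exp.pop b)) Exp.zero

/-- A pure push expression: all its letters are push symbols (`0` and `1` count). -/
inductive PurePush {V : Type} : Exp V → Prop
  | zero : PurePush Exp.zero
  | one : PurePush Exp.one
  | push (v : V) : PurePush (Exp.push v)
  | plus {e f : Exp V} : PurePush e → PurePush f → PurePush (e.plus f)
  | seq {e f : Exp V} : PurePush e → PurePush f → PurePush (e.seq f)
  | star {e : Exp V} : PurePush e → PurePush e.star

/-- A pure pop expression: all its letters are pop symbols (`0` and `1` count). -/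
inductive PurePop {V : Type} : Exp V → Prop
  | zero : PurePop Exp.zero
  | one : PurePop Exp.one
  | pop (v : V) : PurePop (Exp.pop v)
  | plus {e f : Exp V} : PurePop e → PurePop f → PurePop (e.plus f)
  | seq {e f : Exp V} : PurePop e → PurePop f → PurePop (e.seq f)
  | star {e : Exp V} : PurePop e → PurePop e.star

/-- Normal form: a finite sum of products `ē·d` with `ē` pure pop and `d` pure push. -/
inductive IsNF {V : Type} : Exp V → Prop
  | prod {ebar d : Exp V} : PurePop ebar → PurePush d → IsNF (ebar.seq d)
  | plus {e f : Exp V} : IsNF e → IsNF f → IsNF (e.plus f)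

/-!
In the quotient `PushPopKA V` of expressions by provable equality, a Kleene algebra, `e` is the
value of its derivative automaton, whose transitions read `push v`, `pop v` or nothing. A path is
matched when its pushes and pops pair up like brackets; by `push a · pop a = 1` it lies above `1`.
After saturating by matched paths, `A.paths Exp.pop q p` collects the pop words from `p` to `q`
and `A.paths Exp.push A.final q` the push words from `q` to acceptance. Both are least solutions
of finite left-linear systems, hence classes of pure pop and pure push expressions (Kleene's
theorem), and `A.value p` sums their products over `q`. The value is below `e` by fixpoint
induction, and above it because it is closed under the transitions: a push transition either
cancels against the first pop of the pop phase (`push a · pop b = 0` for `a ≠ b`), closing a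
matched path, or is absorbed by the push phase.
-/

open Computability

section LinearSystem

variable {α : Type*} [KleeneAlgebra α]

structure IsKleeneClosed (P : α → Prop) : Prop where
  zero : P 0
  one : P 1
  add {a b : α} : P a → P b → P (a + b)
  mul {a b : α} : P a → P b → P (a * b)
  kstar {a : α} : P a → P a∗

theorem IsKleeneClosed.sum {P : α → Prop} (hP : IsKleeneClosed P) {ι : Type*} (s : Finset ι)
    {f : ι → α} (hf : ∀ i ∈ s, P (f i)) : P (∑ i ∈ s, f i) :=
  Finset.sum_induction f P (fun _ _ => hP.add) hP.zero hf

structure IsLeastSolution {σ : Type*} [Fintype σ] (A : σ → σ → α) (b y : σ → α) :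
    Prop where
  eq (p : σ) : y p = b p + ∑ r, A p r * y r
  mul_le (c : α) (z : σ → α) :
    (∀ p, b p * c + ∑ r, A p r * z r ≤ z p) → ∀ p, y p * c ≤ z p

def HasLeastSolutions (α : Type*) [KleeneAlgebra α] (σ : Type*) [Fintype σ] : Prop :=
  ∀ (A : σ → σ → α) (b : σ → α), ∃ y, IsLeastSolution A b y ∧
    ∀ P, IsKleeneClosed P → (∀ p r, P (A p r)) → (∀ p, P (b p)) → ∀ p, P (y p)

theorem hasLeastSolutions_pempty : HasLeastSolutions α PEmpty :=
  fun _ _ => ⟨PEmpty.elim, ⟨nofun, fun _ _ _ => nofun⟩, fun _ _ _ _ => nofun⟩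

theorem HasLeastSolutions.of_equiv {σ τ : Type*} [Fintype σ] [Fintype τ] (e : σ ≃ τ)
    (h : HasLeastSolutions α σ) : HasLeastSolutions α τ := by
  intro A b
  obtain ⟨y, hy, hgen⟩ := h (fun p r => A (e p) (e r)) (fun p => b (e p))
  refine ⟨fun p => y (e.symm p), ⟨fun p => ?_, fun c z hz p => ?_⟩,
    fun P hP hA hb p => hgen P hP (fun _ _ => hA _ _) (fun _ => hb _) _⟩
  · have := hy.eq (e.symm p)
    simp only [e.apply_symm_apply] at this
    rw [this, ← e.sum_comp]
    simp only [e.symm_apply_apply]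
  · have := hy.mul_le c (fun r => z (e r)) (fun p => ?_) (e.symm p)
    · simpa only [e.apply_symm_apply] using this
    · convert hz (e p) using 2
      exact e.sum_comp (fun r => A (e p) r * z r)

section Elimination

variable {σ : Type*} [Fintype σ] (A : Option σ → Option σ → α) (b : Option σ → α)

/-- Solving the `none` equation as `y none = (A none none)∗ * (b none + ∑ r, A none r * y r)`
and substituting it into the others: the state-elimination step of Kleene's theorem. -/
def eliminateMatrix (p r : σ) : α :=
  A (some p) (some r) + A (some p) none * ((A none none)∗ * A none (some r))

def eliminateVector (p : σ) : α := b (some p) + A (some p) none * ((A none none)∗ * b none)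

def extendSolution (y : σ → α) : Option σ → α
  | none => (A none none)∗ * (b none + ∑ r, A none (some r) * y r)
  | some p => y p

variable {A b}

theorem extendSolution_eq {y : σ → α}
    (hy : ∀ p, y p = eliminateVector A b p + ∑ r, eliminateMatrix A p r * y r) (p : Option σ) :
    extendSolution A b y p = b p + ∑ r, A p r * extendSolution A b y r := by
  rw [Fintype.sum_option]
  cases p with
  | none =>
    simp only [extendSolution]
    conv_lhs => rw [← one_add_mul_kstar]
    simp only [add_mul, one_mul, mul_assoc]
    abel
  | some p =>
    simp only [extendSolution]
    rw [hy p]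
    simp only [eliminateVector, eliminateMatrix, add_mul, mul_add, Finset.mul_sum,
      Finset.sum_add_distrib, mul_assoc]
    abel

theorem extendSolution_mul_le {y : σ → α} (hy : IsLeastSolution (eliminateMatrix A)
    (eliminateVector A b) y) (c : α) (z : Option σ → α)
    (hz : ∀ p, b p * c + (A p none * z none + ∑ r, A p (some r) * z (some r)) ≤ z p)
    (p : Option σ) : extendSolution A b y p * c ≤ z p := by
  have hz_none : (A none none)∗ * (b none * c + ∑ r, A none (some r) * z (some r)) ≤ z none :=
    kstar_mul_le ((add_le_add_right le_add_self _).trans (hz none))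
      ((le_add_left le_self_add).trans (hz none))
  have hy_le : ∀ p, y p * c ≤ z (some p) := by
    refine hy.mul_le c _ fun p => ?_
    calc _ = b (some p) * c + (A (some p) none * ((A none none)∗ *
          (b none * c + ∑ r, A none (some r) * z (some r))) +
            ∑ r, A (some p) (some r) * z (some r)) := by
          simp only [eliminateVector, eliminateMatrix, add_mul, mul_add, Finset.mul_sum,
            Finset.sum_add_distrib, mul_assoc]
          abel
      _ ≤ z (some p) := by grw [hz_none]; exact hz (some p)
  cases p with
  | none =>
    calc _ = (A none none)∗ * (b none * c + ∑ r, A none (some r) * (y r * c)) := by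
          simp only [extendSolution, add_mul, Finset.sum_mul, mul_assoc]
      _ ≤ z none := by grw [hy_le]; exact hz_none
  | some p => exact hy_le p

theorem IsLeastSolution.extendSolution {y : σ → α}
    (hy : IsLeastSolution (eliminateMatrix A) (eliminateVector A b) y) :
    IsLeastSolution A b (extendSolution A b y) where
  eq := extendSolution_eq hy.eq
  mul_le c z hz :=
    extendSolution_mul_le hy c z fun p => Fintype.sum_option (fun r => A p r * z r) ▸ hz p

end Elimination

theorem HasLeastSolutions.option {σ : Type*} [Fintype σ] (h : HasLeastSolutions α σ) :
    HasLeastSolutions α (Option σ) := by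
  intro A b
  obtain ⟨y, hy, hgen⟩ := h (eliminateMatrix A) (eliminateVector A b)
  refine ⟨extendSolution A b y, hy.extendSolution, fun P hP hA hb p => ?_⟩
  have hy' : ∀ p, P (y p) := hgen P hP
    (fun _ _ => hP.add (hA _ _) (hP.mul (hA _ _) (hP.mul (hP.kstar (hA _ _)) (hA _ _))))
    (fun _ => hP.add (hb _) (hP.mul (hA _ _) (hP.mul (hP.kstar (hA _ _)) (hb _))))
  cases p with
  | none =>
    exact hP.mul (hP.kstar (hA _ _)) (hP.add (hb _) (hP.sum _ fun r _ => hP.mul (hA _ _) (hy' r)))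
  | some p => exact hy' p

theorem hasLeastSolutions (σ : Type*) [Fintype σ] : HasLeastSolutions α σ := by
  refine Fintype.induction_empty_option (P := fun σ _ => HasLeastSolutions α σ)
    (fun _ _ _ e h => @HasLeastSolutions.of_equiv _ _ _ _ (.ofEquiv _ e.symm) _ e h)
    hasLeastSolutions_pempty (fun _ _ h => h.option) σ

section LeastSolution

variable {σ : Type*} [Fintype σ] (A : σ → σ → α) (b : σ → α)

noncomputable def leastSolution : σ → α := (hasLeastSolutions σ A b).choose

theorem isLeastSolution_leastSolution : IsLeastSolution A b (leastSolution A b) :=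
  (hasLeastSolutions σ A b).choose_spec.1

theorem IsKleeneClosed.leastSolution {P : α → Prop} (hP : IsKleeneClosed P)
    (hA : ∀ p r, P (A p r)) (hb : ∀ p, P (b p)) (p : σ) : P (leastSolution A b p) :=
  (hasLeastSolutions σ A b).choose_spec.2 P hP hA hb p

end LeastSolution

end LinearSystem

theorem IdemSemiring.sum_le {α ι : Type*} [IdemSemiring α] {s : Finset ι} {f : ι → α}
    {c : α} (h : ∀ i ∈ s, f i ≤ c) : ∑ i ∈ s, f i ≤ c :=
  Finset.sum_induction f (· ≤ c) (fun _ _ => add_le) zero_le h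

theorem ite_zero_le_ite_zero {α : Type*} [IdemSemiring α] {P Q : Prop} [Decidable P]
    [Decidable Q] (h : P → Q) (a : α) : (if P then a else 0) ≤ if Q then a else 0 := by
  split_ifs with hP hQ
  · exact le_rfl
  · exact absurd (h hP) hQ
  · exact zero_le
  · exact le_rfl

variable {V : Type}

instance Exp.kaSetoid (V : Type) : Setoid (Exp V) :=
  ⟨KAeq, ⟨KAeq.refl, KAeq.symm, KAeq.trans⟩⟩

abbrev PushPopKA (V : Type) : Type := Quotient (Exp.kaSetoid V)

namespace PushPopKA

def mk (e : Exp V) : PushPopKA V := Quotient.mk _ e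

theorem mk_eq_mk {e f : Exp V} : mk e = mk f ↔ KAeq e f := Quotient.eq

instance : Zero (PushPopKA V) := ⟨mk Exp.zero⟩
instance : One (PushPopKA V) := ⟨mk Exp.one⟩
instance : Add (PushPopKA V) :=
  ⟨Quotient.map₂ Exp.plus fun _ _ h _ _ h' => KAeq.plus_congr h h'⟩
instance : Mul (PushPopKA V) :=
  ⟨Quotient.map₂ Exp.seq fun _ _ h _ _ h' => KAeq.seq_congr h h'⟩
instance : KStar (PushPopKA V) := ⟨Quotient.map Exp.star fun _ _ h => KAeq.star_congr h⟩

@[simp] theorem mk_zero : (mk Exp.zero : PushPopKA V) = 0 := rfl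
@[simp] theorem mk_one : (mk Exp.one : PushPopKA V) = 1 := rfl
@[simp] theorem mk_plus (e f : Exp V) : mk (e.plus f) = mk e + mk f := rfl
@[simp] theorem mk_seq (e f : Exp V) : mk (e.seq f) = mk e * mk f := rfl
@[simp] theorem mk_star (e : Exp V) : mk e.star = (mk e)∗ := rfl

instance : Semiring (PushPopKA V) where
  add_assoc := by rintro ⟨e⟩ ⟨f⟩ ⟨g⟩; exact mk_eq_mk.2 (.plus_assoc e f g)
  add_comm := by rintro ⟨e⟩ ⟨f⟩; exact mk_eq_mk.2 (.plus_comm e f)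
  zero_add := by rintro ⟨e⟩; exact mk_eq_mk.2 ((KAeq.plus_comm _ e).trans (.plus_zero e))
  add_zero := by rintro ⟨e⟩; exact mk_eq_mk.2 (.plus_zero e)
  mul_assoc := by rintro ⟨e⟩ ⟨f⟩ ⟨g⟩; exact mk_eq_mk.2 (.seq_assoc e f g)
  one_mul := by rintro ⟨e⟩; exact mk_eq_mk.2 (.one_seq e)
  mul_one := by rintro ⟨e⟩; exact mk_eq_mk.2 (.seq_one e)
  zero_mul := by rintro ⟨e⟩; exact mk_eq_mk.2 (.zero_seq e)
  mul_zero := by rintro ⟨e⟩; exact mk_eq_mk.2 (.seq_zero e)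
  left_distrib := by rintro ⟨e⟩ ⟨f⟩ ⟨g⟩; exact mk_eq_mk.2 (.left_distrib e f g)
  right_distrib := by rintro ⟨e⟩ ⟨f⟩ ⟨g⟩; exact mk_eq_mk.2 (.right_distrib e f g)
  nsmul := nsmulRec
  npow := npowRec

instance : IdemSemiring (PushPopKA V) :=
  .ofSemiring (by rintro ⟨e⟩; exact mk_eq_mk.2 (.plus_idem e))

theorem one_add_mul_kstar_le (a : PushPopKA V) : 1 + a * a∗ ≤ a∗ := by
  induction a using Quotient.ind with | _ e => exact mk_eq_mk.2 (.star_unfold_left e)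

theorem one_add_kstar_mul_le (a : PushPopKA V) : 1 + a∗ * a ≤ a∗ := by
  induction a using Quotient.ind with | _ e => exact mk_eq_mk.2 (.star_unfold_right e)

theorem kstar_mul_le_of_add_mul_le {a b x : PushPopKA V} : b + a * x ≤ x → a∗ * b ≤ x := by
  induction a using Quotient.ind; induction b using Quotient.ind; induction x using Quotient.ind
  exact fun h => mk_eq_mk.2 (.star_fix_left (mk_eq_mk.1 h))

theorem mul_kstar_le_of_add_mul_le {a b x : PushPopKA V} : b + x * a ≤ x → b * a∗ ≤ x := by
  induction a using Quotient.ind; induction b using Quotient.ind; induction x using Quotient.ind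
  exact fun h => mk_eq_mk.2 (.star_fix_right (mk_eq_mk.1 h))

instance : KleeneAlgebra (PushPopKA V) where
  one_le_kstar a := le_of_add_le_left (one_add_mul_kstar_le a)
  mul_kstar_le_kstar a := le_of_add_le_right (one_add_mul_kstar_le a)
  kstar_mul_le_kstar a := le_of_add_le_right (one_add_kstar_mul_le a)
  mul_kstar_le_self _ _ h := mul_kstar_le_of_add_mul_le (add_le le_rfl h)
  kstar_mul_le_self _ _ h := kstar_mul_le_of_add_mul_le (add_le le_rfl h)

theorem push_mul_pop (a : V) : mk (Exp.push a) * mk (Exp.pop a) = (1 : PushPopKA V) :=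
  mk_eq_mk.2 (.push_pop a)

theorem push_mul_pop_of_ne {a b : V} (h : a ≠ b) :
    mk (Exp.push a) * mk (Exp.pop b) = (0 : PushPopKA V) :=
  mk_eq_mk.2 (.push_pop_ne h)

end PushPopKA

namespace Exp

open Classical

/-- `Step e x e'`: `e` can start with `x` (a letter, or `one` for a silent move) and continue
as `e'`. -/
inductive Step : Exp V → Exp V → Exp V → Prop
  | push (v : V) : Step (Exp.push v) (Exp.push v) Exp.one
  | pop (v : V) : Step (Exp.pop v) (Exp.pop v) Exp.one
  | plus_left (e f : Exp V) : Step (e.plus f) Exp.one e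
  | plus_right (e f : Exp V) : Step (e.plus f) Exp.one f
  | one_seq (f : Exp V) : Step (Exp.one.seq f) Exp.one f
  | seq_left {e e' x : Exp V} (f : Exp V) : Step e x e' → Step (e.seq f) x (e'.seq f)
  | star_one (e : Exp V) : Step e.star Exp.one Exp.one
  | star_unfold (e : Exp V) : Step e.star Exp.one (e.seq e.star)

theorem Step.label_cases {e x e' : Exp V} (h : Step e x e') :
    x = Exp.one ∨ (∃ v, x = Exp.push v) ∨ ∃ v, x = Exp.pop v := by
  induction h with
  | push v => exact .inr (.inl ⟨v, rfl⟩)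
  | pop v => exact .inr (.inr ⟨v, rfl⟩)
  | seq_left _ _ ih => exact ih
  | _ => exact .inl rfl

noncomputable def closure : Exp V → Finset (Exp V)
  | Exp.zero => {Exp.zero, Exp.one}
  | Exp.one => {Exp.one}
  | Exp.push v => {Exp.push v, Exp.one}
  | Exp.pop v => {Exp.pop v, Exp.one}
  | Exp.plus e f => insert (e.plus f) (closure e ∪ closure f)
  | Exp.seq e f => (closure e).image (·.seq f) ∪ closure f
  | Exp.star e => insert e.star (insert Exp.one ((closure e).image (·.seq e.star)))

theorem mem_closure_self (e : Exp V) : e ∈ closure e := by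
  cases e with
  | seq e f => exact Finset.mem_union_left _ (Finset.mem_image_of_mem _ (mem_closure_self e))
  | _ => simp [closure]

theorem one_mem_closure (e : Exp V) : Exp.one ∈ closure e := by
  induction e with
  | plus e f ihe _ => simp [closure, ihe]
  | seq e f _ ihf => simp [closure, ihf]
  | _ => simp [closure]

theorem Step.mem_closure {e t x t' : Exp V} (h : Step t x t') (ht : t ∈ closure e) :
    t' ∈ closure e := by
  induction e generalizing t x t' with
  | zero | one | push | pop =>
    simp only [closure, Finset.mem_insert, Finset.mem_singleton] at ht ⊢
    rcases ht with rfl | rfl <;> cases h <;> simp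
  | plus e f ihe ihf =>
    simp only [closure, Finset.mem_insert, Finset.mem_union] at ht ⊢
    rcases ht with rfl | ht | ht
    · cases h <;> simp [mem_closure_self]
    · exact .inr (.inl (ihe h ht))
    · exact .inr (.inr (ihf h ht))
  | seq e f ihe ihf =>
    simp only [closure, Finset.mem_union, Finset.mem_image] at ht ⊢
    rcases ht with ⟨u, hu, rfl⟩ | ht
    · cases h with
      | one_seq => exact .inr (mem_closure_self f)
      | seq_left _ h => exact .inl ⟨_, ihe h hu, rfl⟩
    · exact .inr (ihf h ht)
  | star e ih =>
    simp only [closure, Finset.mem_insert, Finset.mem_image] at ht ⊢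
    rcases ht with rfl | rfl | ⟨u, hu, rfl⟩
    · cases h with
      | star_one => exact .inr (.inl rfl)
      | star_unfold => exact .inr (.inr ⟨e, mem_closure_self e, rfl⟩)
    · cases h
    · cases h with
      | one_seq => exact .inl rfl
      | seq_left _ h => exact .inr (.inr ⟨_, ih h hu, rfl⟩)

end Exp

namespace PushPopKA

open Exp (Step)

theorem mk_mul_le_of_step {e x e' : Exp V} (h : Step e x e') : mk x * mk e' ≤ mk e := by
  induction h with
  | seq_left f _ ih => simpa only [mk_seq, ← mul_assoc] using mul_le_mul_left ih (mk f)
  | star_unfold e => simpa using mul_kstar_le_kstar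
  | _ => simp

/-- `c` stands for the continuation: the induction passes from `e.seq f` to `e` with `c` replaced
by `mk f * c`. -/
theorem mk_mul_le_of_step_le {S : Set (Exp V)}
    (hS : ∀ {t x t'}, Step t x t' → t ∈ S → t' ∈ S)
    (w : S → PushPopKA V) {c : PushPopKA V}
    (hw : ∀ {t x t'} (h : Step t x t') (ht : t ∈ S),
      mk x * w ⟨t', hS h ht⟩ ≤ w ⟨t, ht⟩)
    (hc : ∀ h : Exp.one ∈ S, c ≤ w ⟨_, h⟩) (e : Exp V) (he : e ∈ S) :
    mk e * c ≤ w ⟨e, he⟩ := by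
  induction e generalizing S c with
  | zero => simp
  | one => simpa using hc he
  | push v => exact (mul_le_mul_right (hc (hS (.push v) he)) _).trans (hw (.push v) he)
  | pop v => exact (mul_le_mul_right (hc (hS (.pop v) he)) _).trans (hw (.pop v) he)
  | plus e f ihe ihf =>
    rw [mk_plus, add_mul]
    exact add_le
      ((ihe hS w hw hc _).trans ((one_mul _).symm.trans_le (hw (.plus_left e f) he)))
      ((ihf hS w hw hc _).trans ((one_mul _).symm.trans_le (hw (.plus_right e f) he)))
  | seq e f ihe ihf =>
    rw [mk_seq, mul_assoc]
    refine ihe (S := {t | t.seq f ∈ S}) (c := mk f * c) (fun h ht => hS (.seq_left f h) ht)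
      (fun p => w ⟨p.1.seq f, p.2⟩) (fun h ht => hw (.seq_left f h) ht) (fun h => ?_) he
    exact (ihf hS w hw hc _).trans ((one_mul _).symm.trans_le (hw (.one_seq f) h))
  | star e ih =>
    rw [mk_star]
    refine kstar_mul_le ((hc _).trans ((one_mul _).symm.trans_le (hw (.star_one e) he))) ?_
    refine (ih (S := {t | t.seq e.star ∈ S}) (c := w ⟨e.star, he⟩)
      (fun h ht => hS (.seq_left _ h) ht) (fun p => w ⟨p.1.seq e.star, p.2⟩)
      (fun h ht => hw (.seq_left _ h) ht)
      (fun h => (one_mul _).symm.trans_le (hw (.one_seq _) h))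
      (hS (.star_unfold e) he)).trans ?_
    exact (one_mul _).symm.trans_le (hw (.star_unfold e) he)

def HasRep (P : Exp V → Prop) (x : PushPopKA V) : Prop := ∃ e, P e ∧ mk e = x

theorem isKleeneClosed_hasRep_purePop : IsKleeneClosed (HasRep (V := V) PurePop) where
  zero := ⟨_, .zero, rfl⟩
  one := ⟨_, .one, rfl⟩
  add := by rintro _ _ ⟨e, he, rfl⟩ ⟨f, hf, rfl⟩; exact ⟨_, he.plus hf, rfl⟩
  mul := by rintro _ _ ⟨e, he, rfl⟩ ⟨f, hf, rfl⟩; exact ⟨_, he.seq hf, rfl⟩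
  kstar := by rintro _ ⟨e, he, rfl⟩; exact ⟨_, he.star, rfl⟩

theorem isKleeneClosed_hasRep_purePush : IsKleeneClosed (HasRep (V := V) PurePush) where
  zero := ⟨_, .zero, rfl⟩
  one := ⟨_, .one, rfl⟩
  add := by rintro _ _ ⟨e, he, rfl⟩ ⟨f, hf, rfl⟩; exact ⟨_, he.plus hf, rfl⟩
  mul := by rintro _ _ ⟨e, he, rfl⟩ ⟨f, hf, rfl⟩; exact ⟨_, he.seq hf, rfl⟩
  kstar := by rintro _ ⟨e, he, rfl⟩; exact ⟨_, he.star, rfl⟩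

theorem hasRep_isNF_zero : HasRep IsNF (0 : PushPopKA V) :=
  ⟨_, .prod .zero .zero, zero_mul (0 : PushPopKA V)⟩

theorem HasRep.isNF_add {x y : PushPopKA V} :
    HasRep IsNF x → HasRep IsNF y → HasRep IsNF (x + y) := by
  rintro ⟨e, he, rfl⟩ ⟨f, hf, rfl⟩; exact ⟨_, he.plus hf, rfl⟩

theorem HasRep.isNF_mul {x y : PushPopKA V} :
    HasRep PurePop x → HasRep PurePush y → HasRep IsNF (x * y) := by
  rintro ⟨e, he, rfl⟩ ⟨f, hf, rfl⟩; exact ⟨_, .prod he hf, rfl⟩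

-- The constructor is renamed so that `mk` still means `PushPopKA.mk` in `namespace Automaton`.
structure Automaton (V : Type) (σ : Type*) where
  ofStep ::
  step : σ → Exp V → σ → Prop
  final : σ

namespace Automaton

variable {σ : Type*} (A : Automaton V σ)

inductive Matched : σ → σ → Prop
  | refl (p : σ) : Matched p p
  | silent {p q : σ} : A.step p Exp.one q → Matched p q
  | trans {p q r : σ} : Matched p q → Matched q r → Matched p r
  | wrap {p p' q' q : σ} {v : V} :
      A.step p (Exp.push v) p' → Matched p' q' → A.step q' (Exp.pop v) q → Matched p q

theorem Matched.le {h : σ → PushPopKA V}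
    (hstep : ∀ {p x q}, A.step p x q → mk x * h q ≤ h p) {p q : σ} (hm : A.Matched p q) :
    h q ≤ h p := by
  induction hm with
  | refl => exact le_rfl
  | silent hs => exact (one_mul _).symm.trans_le (hstep hs)
  | trans _ _ ih₁ ih₂ => exact ih₂.trans ih₁
  | @wrap p p' q' q v hpush _ hpop ih =>
    calc h q = mk (Exp.push v) * (mk (Exp.pop v) * h q) := by
          rw [← mul_assoc, push_mul_pop, one_mul]
      _ ≤ mk (Exp.push v) * h p' := mul_le_mul_right ((hstep hpop).trans ih) _
      _ ≤ h p := hstep hpush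

variable [Fintype V] [Fintype σ]

open Classical

noncomputable def transition (ℓ : V → Exp V) (p r : σ) : PushPopKA V :=
  ∑ v, if ∃ p', A.Matched p p' ∧ A.step p' (ℓ v) r then mk (ℓ v) else 0

noncomputable def paths (ℓ : V → Exp V) (q : σ) : σ → PushPopKA V :=
  leastSolution (A.transition ℓ) fun p => if A.Matched p q then 1 else 0

noncomputable def value (p : σ) : PushPopKA V :=
  ∑ q, A.paths Exp.pop q p * A.paths Exp.push A.final q

variable {A}

theorem le_transition {ℓ : V → Exp V} {p p' r : σ} {v : V} (hm : A.Matched p p')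
    (hs : A.step p' (ℓ v) r) : mk (ℓ v) ≤ A.transition ℓ p r := by
  have := Finset.single_le_sum (f := fun v => if ∃ p', A.Matched p p' ∧ A.step p' (ℓ v) r
    then mk (ℓ v) else 0) (fun _ _ => zero_le) (Finset.mem_univ v)
  rwa [if_pos ⟨p', hm, hs⟩] at this

theorem transition_anti (ℓ : V → Exp V) {p p₁ : σ} (h : A.Matched p p₁) (r : σ) :
    A.transition ℓ p₁ r ≤ A.transition ℓ p r :=
  Finset.sum_le_sum fun _ _ =>
    ite_zero_le_ite_zero (fun ⟨p', hm, hs⟩ => ⟨p', h.trans hm, hs⟩) _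

theorem push_mul_transition_pop (v : V) (p r : σ) :
    mk (Exp.push v) * A.transition Exp.pop p r =
      if ∃ p', A.Matched p p' ∧ A.step p' (Exp.pop v) r then 1 else 0 := by
  rw [transition, Finset.mul_sum, Finset.sum_eq_single v]
  · simp only [mul_ite, push_mul_pop, mul_zero]
  · intro w _ hw
    simp only [mul_ite, push_mul_pop_of_ne (Ne.symm hw), mul_zero, ite_self]
  · exact fun h => absurd (Finset.mem_univ v) h

theorem paths_eq (ℓ : V → Exp V) (q p : σ) :
    A.paths ℓ q p =
      (if A.Matched p q then 1 else 0) + ∑ r, A.transition ℓ p r * A.paths ℓ q r :=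
  (isLeastSolution_leastSolution _ _).eq p

theorem paths_anti (ℓ : V → Exp V) (q : σ) {p p₁ : σ} (h : A.Matched p p₁) :
    A.paths ℓ q p₁ ≤ A.paths ℓ q p := by
  rw [paths_eq, paths_eq]
  exact add_le_add (ite_zero_le_ite_zero h.trans 1)
    (Finset.sum_le_sum fun r _ => mul_le_mul_left (transition_anti ℓ h r) _)

theorem one_le_paths (ℓ : V → Exp V) {p q : σ} (h : A.Matched p q) :
    1 ≤ A.paths ℓ q p := by
  rw [paths_eq, if_pos h]
  exact le_self_add

theorem mk_mul_paths_le {ℓ : V → Exp V} {p p' r : σ} {v : V} (hm : A.Matched p p')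
    (hs : A.step p' (ℓ v) r) (q : σ) : mk (ℓ v) * A.paths ℓ q r ≤ A.paths ℓ q p := by
  rw [A.paths_eq ℓ q p]
  calc mk (ℓ v) * A.paths ℓ q r ≤ A.transition ℓ p r * A.paths ℓ q r :=
        mul_le_mul_left (le_transition hm hs) _
    _ ≤ ∑ r, A.transition ℓ p r * A.paths ℓ q r :=
        Finset.single_le_sum (f := fun r => A.transition ℓ p r * A.paths ℓ q r)
          (fun _ _ => zero_le) (Finset.mem_univ r)
    _ ≤ _ := le_add_self

theorem _root_.IsKleeneClosed.paths {P : PushPopKA V → Prop} (hP : IsKleeneClosed P)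
    {ℓ : V → Exp V} (hℓ : ∀ v, P (mk (ℓ v))) (q p : σ) : P (A.paths ℓ q p) := by
  refine hP.leastSolution _ _ (fun p r => hP.sum _ fun v _ => ?_) (fun p => ?_) p
  · split_ifs
    exacts [hℓ v, hP.zero]
  · split_ifs
    exacts [hP.one, hP.zero]

theorem paths_mul_le {h : σ → PushPopKA V}
    (hstep : ∀ {p x q}, A.step p x q → mk x * h q ≤ h p) (ℓ : V → Exp V) (q p : σ) :
    A.paths ℓ q p * h q ≤ h p := by
  refine (isLeastSolution_leastSolution _ _).mul_le (h q) h (fun p => add_le ?_ ?_) p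
  · split_ifs with hm
    · exact (one_mul _).trans_le (hm.le A hstep)
    · exact (zero_mul _).trans_le zero_le
  · refine IdemSemiring.sum_le fun r _ => ?_
    rw [transition, Finset.sum_mul]
    refine IdemSemiring.sum_le fun v _ => ?_
    split_ifs with hv
    · obtain ⟨p', hm, hs⟩ := hv
      exact (hstep hs).trans (hm.le A hstep)
    · exact (zero_mul _).trans_le zero_le

theorem value_anti {p p₁ : σ} (h : A.Matched p p₁) : A.value p₁ ≤ A.value p :=
  Finset.sum_le_sum fun q _ => mul_le_mul_left (paths_anti Exp.pop q h) _

theorem paths_push_le_value (p : σ) : A.paths Exp.push A.final p ≤ A.value p :=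
  calc A.paths Exp.push A.final p = 1 * A.paths Exp.push A.final p := (one_mul _).symm
    _ ≤ A.paths Exp.pop p p * A.paths Exp.push A.final p :=
        mul_le_mul_left (one_le_paths _ (.refl p)) _
    _ ≤ A.value p :=
        Finset.single_le_sum (f := fun q => A.paths Exp.pop q p * A.paths Exp.push A.final q)
          (fun _ _ => zero_le) (Finset.mem_univ p)

theorem one_le_value {p : σ} (h : A.Matched p A.final) : 1 ≤ A.value p :=
  (one_le_paths _ h).trans (paths_push_le_value p)

theorem pop_mul_value_le {p r : σ} {v : V} (hs : A.step p (Exp.pop v) r) :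
    mk (Exp.pop v) * A.value r ≤ A.value p := by
  rw [value, value, Finset.mul_sum]
  refine Finset.sum_le_sum fun q _ => ?_
  rw [← mul_assoc]
  exact mul_le_mul_left (mk_mul_paths_le (.refl p) hs q) _

theorem push_mul_value_le {p p' : σ} {v : V} (hs : A.step p (Exp.push v) p') :
    mk (Exp.push v) * A.value p' ≤ A.value p := by
  rw [value, Finset.mul_sum]
  refine IdemSemiring.sum_le fun q _ => ?_
  rw [← mul_assoc, paths_eq, mul_add, add_mul, Finset.mul_sum, Finset.sum_mul]
  refine add_le ?_ (IdemSemiring.sum_le fun r _ => ?_)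
  · split_ifs with hm
    · rw [mul_one]
      calc mk (Exp.push v) * A.paths Exp.push A.final q
          ≤ mk (Exp.push v) * A.paths Exp.push A.final p' :=
            mul_le_mul_right (paths_anti _ _ hm) _
        _ ≤ A.paths Exp.push A.final p := mk_mul_paths_le (.refl p) hs _
        _ ≤ A.value p := paths_push_le_value p
    · rw [mul_zero, zero_mul]
      exact zero_le
  · rw [← mul_assoc, push_mul_transition_pop]
    split_ifs with hr
    · obtain ⟨q', hm, hpop⟩ := hr
      rw [one_mul]
      calc A.paths Exp.pop q r * A.paths Exp.push A.final q ≤ A.value r :=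
            Finset.single_le_sum (f := fun q => A.paths Exp.pop q r * A.paths Exp.push A.final q)
              (fun _ _ => zero_le) (Finset.mem_univ q)
        _ ≤ A.value p := value_anti (.wrap hs hm hpop)
    · rw [zero_mul, zero_mul]
      exact zero_le

theorem value_le {h : σ → PushPopKA V} (hstep : ∀ {p x q}, A.step p x q → mk x * h q ≤ h p)
    (hfinal : 1 ≤ h A.final) (p : σ) : A.value p ≤ h p := by
  refine IdemSemiring.sum_le fun q _ => ?_
  have hpush : A.paths Exp.push A.final q ≤ h q :=
    calc A.paths Exp.push A.final q = A.paths Exp.push A.final q * 1 := (mul_one _).symm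
      _ ≤ A.paths Exp.push A.final q * h A.final := mul_le_mul_right hfinal _
      _ ≤ h q := paths_mul_le hstep _ _ _
  exact (mul_le_mul_right hpush _).trans (paths_mul_le hstep _ _ _)

theorem hasRep_isNF_value (p : σ) : HasRep IsNF (A.value p) :=
  Finset.sum_induction _ (HasRep IsNF) (fun _ _ => HasRep.isNF_add) hasRep_isNF_zero
    fun q _ => HasRep.isNF_mul
      (isKleeneClosed_hasRep_purePop.paths (fun v => ⟨_, .pop v, rfl⟩) q p)
      (isKleeneClosed_hasRep_purePush.paths (fun v => ⟨_, .push v, rfl⟩) _ q)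

end Automaton

open Exp (closure)

noncomputable def automaton (e : Exp V) : Automaton V (closure e) where
  step p x q := Step p.1 x q.1
  final := ⟨Exp.one, Exp.one_mem_closure e⟩

theorem mk_le_value [Fintype V] (e : Exp V) :
    mk e ≤ (automaton e).value ⟨e, Exp.mem_closure_self e⟩ := by
  refine (mul_one (mk e)).symm.trans_le (mk_mul_le_of_step_le (S := closure e)
    (fun h ht => h.mem_closure ht) (automaton e).value ?_ (fun _ => ?_) e _)
  · intro t x t' h ht
    rcases h.label_cases with rfl | ⟨v, rfl⟩ | ⟨v, rfl⟩
    · exact (one_mul _).trans_le (Automaton.value_anti (.silent h))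
    · exact Automaton.push_mul_value_le h
    · exact Automaton.pop_mul_value_le h
  · exact Automaton.one_le_value (.refl _)

theorem value_automaton [Fintype V] (e : Exp V) :
    (automaton e).value ⟨e, Exp.mem_closure_self e⟩ = mk e :=
  le_antisymm
    (Automaton.value_le (A := automaton e) (h := fun p => mk p.1) mk_mul_le_of_step le_rfl _)
    (mk_le_value e)

theorem hasRep_isNF_mk [Fintype V] (e : Exp V) : HasRep IsNF (mk e) :=
  value_automaton e ▸ Automaton.hasRep_isNF_value _

end PushPopKA

theorem stmt18_general {V : Type} [Fintype V] (e : Exp V) :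
    ∃ e' : Exp V, IsNF e' ∧ KAeq e e' := by
  obtain ⟨e', he', h⟩ := PushPopKA.hasRep_isNF_mk e
  exact ⟨e', he', PushPopKA.mk_eq_mk.1 h.symm⟩

/-- Every push-pop regular expression can be provably transformed to normal form. -/
theorem stmt18 {V : Type} [Fintype V] [Nonempty V] (e : Exp V) :
    ∃ e' : Exp V, IsNF e' ∧ KAeq e e' :=
  stmt18_general e
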